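/- For λ ∈ k, the primitive quotient U_λ = U(sl₂)/(Ω - (λ² - 1)) is isomorphic to the classical generalized Weyl algebra k[z](σ, a) with σ(z) = z - 1 and a = (1/4)(λ² - 1) - z² - z. -/

import Mathlib

/-- Presentation relations of `U(sl₂)`: generated by `e = ι 0`, `f = ι 1`,
`h = ι 2` with `[e,f] = h`, `[h,e] = 2e`, `[h,f] = -2f`. -/
inductive Sl2Rel (k : Type*) [CommRing k] :
    FreeAlgebra k (Fin 3) → FreeAlgebra k (Fin 3) → Prop
  | ef : Sl2Rel k (FreeAlgebra.ι k 0 * FreeAlgebra.ι k 1)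
      (FreeAlgebra.ι k 1 * FreeAlgebra.ι k 0 + FreeAlgebra.ι k 2)
  | he : Sl2Rel k (FreeAlgebra.ι k 2 * FreeAlgebra.ι k 0)
      (FreeAlgebra.ι k 0 * FreeAlgebra.ι k 2 + 2 * FreeAlgebra.ι k 0)
  | hf : Sl2Rel k (FreeAlgebra.ι k 2 * FreeAlgebra.ι k 1)
      (FreeAlgebra.ι k 1 * FreeAlgebra.ι k 2 - 2 * FreeAlgebra.ι k 1)

/-- The universal enveloping algebra `U(sl₂)`, by its presentation. -/
abbrev Usl2 (k : Type*) [CommRing k] : Type _ := RingQuot (Sl2Rel k)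

/-- The generator `e` of `U(sl₂)`. -/
noncomputable def Ue (k : Type*) [CommRing k] : Usl2 k :=
  RingQuot.mkAlgHom k (Sl2Rel k) (FreeAlgebra.ι k 0)

/-- The generator `f` of `U(sl₂)`. -/
noncomputable def Uf (k : Type*) [CommRing k] : Usl2 k :=
  RingQuot.mkAlgHom k (Sl2Rel k) (FreeAlgebra.ι k 1)

/-- The generator `h` of `U(sl₂)`. -/
noncomputable def Uh (k : Type*) [CommRing k] : Usl2 k :=
  RingQuot.mkAlgHom k (Sl2Rel k) (FreeAlgebra.ι k 2)

/-- The Casimir element `Ω = 4fe + h² + 2h` of `U(sl₂)`. -/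
noncomputable def Casimir (k : Type*) [CommRing k] : Usl2 k :=
  4 * Uf k * Ue k + Uh k ^ 2 + 2 * Uh k

/-- The relation identifying the Casimir element with the scalar `λ² - 1`. -/
inductive CasRel (k : Type*) [CommRing k] (lam : k) : Usl2 k → Usl2 k → Prop
  | rel : CasRel k lam (Casimir k) (algebraMap k (Usl2 k) (lam ^ 2 - 1))

/-- The primitive quotient `U_λ = U(sl₂)/(Ω - (λ² - 1))`. -/
abbrev Ulam (k : Type*) [CommRing k] (lam : k) : Type _ := RingQuot (CasRel k lam)

/-- Presentation relations for the rank `n` generalized Weyl algebra `R(σ, a)`: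
it is generated over `R` (whose ring structure is imposed by the first four
relation families) by `x_i = ι (inr (i, false))` and `y_i = ι (inr (i, true))`,
subject to `x_i r = σ_i(r) x_i`, `y_i r = σ_i⁻¹(r) y_i`, `y_i x_i = a_i`,
`x_i y_i = σ_i(a_i)`, and `[x_i, x_j] = [y_i, y_j] = [x_i, y_j] = 0` for `i ≠ j`. -/
inductive GWARel (k R : Type*) [CommRing k] [Ring R] [Algebra k R]
    (n : ℕ) (σ : Fin n → R ≃ₐ[k] R) (a : Fin n → R) :
    FreeAlgebra k (R ⊕ Fin n × Bool) → FreeAlgebra k (R ⊕ Fin n × Bool) → Prop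
  | add (r s : R) : GWARel k R n σ a (FreeAlgebra.ι k (.inl (r + s)))
      (FreeAlgebra.ι k (.inl r) + FreeAlgebra.ι k (.inl s))
  | mul (r s : R) : GWARel k R n σ a (FreeAlgebra.ι k (.inl (r * s)))
      (FreeAlgebra.ι k (.inl r) * FreeAlgebra.ι k (.inl s))
  | smul (c : k) (r : R) : GWARel k R n σ a (FreeAlgebra.ι k (.inl (c • r)))
      (c • FreeAlgebra.ι k (.inl r))
  | one : GWARel k R n σ a (FreeAlgebra.ι k (.inl 1)) 1
  | xr (i : Fin n) (r : R) : GWARel k R n σ a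
      (FreeAlgebra.ι k (.inr (i, false)) * FreeAlgebra.ι k (.inl r))
      (FreeAlgebra.ι k (.inl (σ i r)) * FreeAlgebra.ι k (.inr (i, false)))
  | yr (i : Fin n) (r : R) : GWARel k R n σ a
      (FreeAlgebra.ι k (.inr (i, true)) * FreeAlgebra.ι k (.inl r))
      (FreeAlgebra.ι k (.inl ((σ i).symm r)) * FreeAlgebra.ι k (.inr (i, true)))
  | yx (i : Fin n) : GWARel k R n σ a
      (FreeAlgebra.ι k (.inr (i, true)) * FreeAlgebra.ι k (.inr (i, false)))
      (FreeAlgebra.ι k (.inl (a i)))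
  | xy (i : Fin n) : GWARel k R n σ a
      (FreeAlgebra.ι k (.inr (i, false)) * FreeAlgebra.ι k (.inr (i, true)))
      (FreeAlgebra.ι k (.inl (σ i (a i))))
  | comm (i j : Fin n) (s t : Bool) (h : i ≠ j) : GWARel k R n σ a
      (FreeAlgebra.ι k (.inr (i, s)) * FreeAlgebra.ι k (.inr (j, t)))
      (FreeAlgebra.ι k (.inr (j, t)) * FreeAlgebra.ι k (.inr (i, s)))

/-- The rank `n` generalized Weyl algebra `R(σ, a)`, presented by generators and
relations. -/
abbrev GWA (k R : Type*) [CommRing k] [Ring R] [Algebra k R]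
    (n : ℕ) (σ : Fin n → R ≃ₐ[k] R) (a : Fin n → R) : Type _ :=
  RingQuot (GWARel k R n σ a)

/-- The image of `r ∈ R` in the generalized Weyl algebra. -/
noncomputable def GWA.r (k R : Type*) [CommRing k] [Ring R] [Algebra k R]
    {n : ℕ} (σ : Fin n → R ≃ₐ[k] R) (a : Fin n → R) (r : R) : GWA k R n σ a :=
  RingQuot.mkAlgHom k (GWARel k R n σ a) (FreeAlgebra.ι k (.inl r))

/-- The generator `x_i` of the generalized Weyl algebra. -/
noncomputable def GWA.x (k R : Type*) [CommRing k] [Ring R] [Algebra k R]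
    {n : ℕ} (σ : Fin n → R ≃ₐ[k] R) (a : Fin n → R) (i : Fin n) : GWA k R n σ a :=
  RingQuot.mkAlgHom k (GWARel k R n σ a) (FreeAlgebra.ι k (.inr (i, false)))

/-- The generator `y_i` of the generalized Weyl algebra. -/
noncomputable def GWA.y (k R : Type*) [CommRing k] [Ring R] [Algebra k R]
    {n : ℕ} (σ : Fin n → R ≃ₐ[k] R) (a : Fin n → R) (i : Fin n) : GWA k R n σ a :=
  RingQuot.mkAlgHom k (GWARel k R n σ a) (FreeAlgebra.ι k (.inr (i, true)))

/-- The automorphism `σ` of `k[z]` with `σ(z) = z - 1`. -/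
noncomputable def shiftDown (k : Type*) [CommRing k] : Polynomial k ≃ₐ[k] Polynomial k :=
  AlgEquiv.ofAlgHom (Polynomial.aeval (Polynomial.X - 1)) (Polynomial.aeval (Polynomial.X + 1))
    (by ext : 1; simp) (by ext : 1; simp)

/-!
The assignment `e ↦ y, f ↦ x, h ↦ -2z` (the paper's `φ` composed with the automorphism
`e ↦ -e, f ↦ -f` of `U(sl₂)`, which fixes `Ω`) respects the `sl₂` relations, since
`yx - xy = a(z) - a(z - 1) = -2z`, and it sends `Ω` to `4a(z - 1) + 4z² - 4z = λ² - 1`, so it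
factors through `U_λ`. Conversely, modulo `Ω = λ² - 1` the products `fe` and `ef = fe + h` are the
polynomials `a(z - 1)` and `a(z)` in `z = -h/2`, and `f`, `e` shift `z` by `∓1`, so
`x ↦ f, y ↦ e, z ↦ -h/2` respects the relations of the GWA. Both composites fix the generators.
-/

open Polynomial

theorem SemiconjBy.aeval {R A : Type*} [CommSemiring R] [Semiring A] [Algebra R A]
    {t u v : A} (h : SemiconjBy t u v) (p : R[X]) :
    SemiconjBy t (aeval u p) (aeval v p) := by
  induction p using Polynomial.induction_on' with
  | add p q hp hq => simpa only [map_add] using hp.add_right hq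
  | monomial n c =>
    simpa only [aeval_monomial] using
      SemiconjBy.mul_right (Algebra.commute_algebraMap_right c t) (h.pow_right n)

theorem ofNat_mul_eq_smul {A : Type*} (k : Type*) [CommSemiring k] [Semiring A] [Algebra k A]
    (n : ℕ) [n.AtLeastTwo] (a : A) : (OfNat.ofNat n : A) * a = (OfNat.ofNat n : k) • a := by
  rw [Algebra.smul_def, map_ofNat]

instance NeZero.four_of_two {α : Type*} [Semiring α] [NoZeroDivisors α] [NeZero (2 : α)] :
    NeZero (4 : α) :=
  ⟨by rw [show (4 : α) = 2 * 2 by norm_num]; exact mul_ne_zero two_ne_zero two_ne_zero⟩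

section ShiftDown

variable {k : Type*} [CommRing k]

theorem shiftDown_apply (p : k[X]) : shiftDown k p = aeval (X - 1) p :=
  rfl

theorem shiftDown_symm_apply (p : k[X]) : (shiftDown k).symm p = aeval (X + 1) p :=
  rfl

variable {A : Type*} [Ring A] [Algebra k A]

theorem aeval_shiftDown (u : A) (p : k[X]) : aeval u (shiftDown k p) = aeval (u - 1) p := by
  rw [shiftDown_apply, ← aeval_algHom_apply]
  simp

theorem aeval_shiftDown_symm (u : A) (p : k[X]) :
    aeval u ((shiftDown k).symm p) = aeval (u + 1) p := by
  rw [shiftDown_symm_apply, ← aeval_algHom_apply]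
  simp

end ShiftDown

section Relations

variable {A : Type*} [Ring A]

structure Sl2Relations (e f h : A) : Prop where
  e_mul_f : e * f = f * e + h
  h_mul_e : h * e = e * h + 2 * e
  h_mul_f : h * f = f * h - 2 * f

/-- The relations of `k[z](σ, a)` with `σ z = z - 1` and `a = c - z² - z`, on the generators
`x`, `y` and `z`. -/
structure ClassicalGWARelations (c x y z : A) : Prop where
  x_mul_z : x * z = (z - 1) * x
  y_mul_z : y * z = (z + 1) * y
  y_mul_x : y * x = c - z ^ 2 - z
  x_mul_y : x * y = c - (z - 1) ^ 2 - (z - 1)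

theorem Sl2Relations.map {B F : Type*} [Ring B] [FunLike F A B] [RingHomClass F A B]
    {e f h : A} (H : Sl2Relations e f h) (g : F) : Sl2Relations (g e) (g f) (g h) where
  e_mul_f := by simpa using congrArg g H.e_mul_f
  h_mul_e := by simpa [map_ofNat] using congrArg g H.h_mul_e
  h_mul_f := by simpa [map_ofNat] using congrArg g H.h_mul_f

theorem ClassicalGWARelations.sl2Relations {k : Type*} [CommRing k] [Algebra k A] {c x y z : A}
    (H : ClassicalGWARelations c x y z) : Sl2Relations y x ((-2 : k) • z) := by
  rw [neg_smul, ← ofNat_mul_eq_smul k]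
  refine ⟨?_, ?_, ?_⟩
  · rw [H.y_mul_x, H.x_mul_y]
    noncomm_ring
  · rw [show y * -(2 * z) = -(2 * (y * z)) by noncomm_ring, H.y_mul_z]
    noncomm_ring
  · rw [show x * -(2 * z) = -(2 * (x * z)) by noncomm_ring, H.x_mul_z]
    noncomm_ring

variable {k : Type*} [Field k] [NeZero (2 : k)] [Algebra k A]

theorem ClassicalGWARelations.casimir {d : k} {x y z : A}
    (H : ClassicalGWARelations (algebraMap k A (d / 4)) x y z) :
    4 * x * y + ((-2 : k) • z) ^ 2 + 2 * (-2 : k) • z = algebraMap k A d := by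
  have h4 : (4 : A) * algebraMap k A (d / 4) = algebraMap k A d := by
    rw [← map_ofNat (algebraMap k A) 4, ← map_mul, mul_div_cancel₀ _ four_ne_zero]
  rw [neg_smul, ← ofNat_mul_eq_smul k, mul_assoc, H.x_mul_y, ← h4]
  noncomm_ring

theorem Sl2Relations.classicalGWARelations {d : k} {e f h : A} (H : Sl2Relations e f h)
    (hcas : 4 * f * e + h ^ 2 + 2 * h = algebraMap k A d) :
    ClassicalGWARelations (algebraMap k A (d / 4)) f e ((-2⁻¹ : k) • h) where
  x_mul_z := by
    simp only [mul_smul_comm, smul_mul_assoc, sub_mul, one_mul]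
    linear_combination (norm := skip) (2⁻¹ : k) • H.h_mul_f
    rw [two_mul]
    match_scalars <;> field_simp <;> ring
  y_mul_z := by
    simp only [mul_smul_comm, smul_mul_assoc, add_mul, one_mul]
    linear_combination (norm := skip) (2⁻¹ : k) • H.h_mul_e
    rw [two_mul]
    match_scalars <;> field_simp <;> ring
  y_mul_x := by
    rw [div_eq_inv_mul, map_mul, ← Algebra.smul_def, ← hcas, H.e_mul_f]
    simp only [smul_add, sq, smul_mul_assoc, mul_smul_comm, ofNat_mul_eq_smul k]
    match_scalars <;> field_simp <;> ring
  x_mul_y := by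
    rw [div_eq_inv_mul, map_mul, ← Algebra.smul_def, ← hcas]
    simp only [smul_add, sq, sub_mul, mul_sub, one_mul, mul_one, smul_mul_assoc, mul_smul_comm,
      ofNat_mul_eq_smul k]
    match_scalars <;> field_simp <;> ring

theorem neg_inv_two_smul_neg_two_smul (a : A) : (-2⁻¹ : k) • (-2 : k) • a = a := by
  rw [smul_smul, neg_mul_neg, inv_mul_cancel₀ two_ne_zero, one_smul]

theorem neg_two_smul_neg_inv_two_smul (a : A) : (-2 : k) • (-2⁻¹ : k) • a = a := by
  rw [smul_smul, neg_mul_neg, mul_inv_cancel₀ two_ne_zero, one_smul]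

end Relations

namespace Usl2

variable (k : Type*) [CommRing k]

theorem sl2Relations : Sl2Relations (Ue k) (Uf k) (Uh k) where
  e_mul_f := by
    simpa only [Ue, Uf, Uh, map_mul, map_add] using RingQuot.mkAlgHom_rel k Sl2Rel.ef
  h_mul_e := by
    simpa only [Ue, Uh, map_mul, map_add, map_ofNat] using RingQuot.mkAlgHom_rel k Sl2Rel.he
  h_mul_f := by
    simpa only [Uf, Uh, map_mul, map_sub, map_ofNat] using RingQuot.mkAlgHom_rel k Sl2Rel.hf

variable {k}

theorem algHom_ext {A : Type*} [Semiring A] [Algebra k A] {g₁ g₂ : Usl2 k →ₐ[k] A}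
    (he : g₁ (Ue k) = g₂ (Ue k)) (hf : g₁ (Uf k) = g₂ (Uf k)) (hh : g₁ (Uh k) = g₂ (Uh k)) :
    g₁ = g₂ :=
  RingQuot.ringQuot_ext' _ _ _ <| FreeAlgebra.hom_ext <| funext fun i ↦ by
    fin_cases i
    exacts [he, hf, hh]

variable {A : Type*} [Ring A] [Algebra k A] {e f h : A}

noncomputable def lift (H : Sl2Relations e f h) : Usl2 k →ₐ[k] A :=
  RingQuot.liftAlgHom k ⟨FreeAlgebra.lift k ![e, f, h], by
    rintro _ _ ⟨⟩ <;> simp [H.e_mul_f, H.h_mul_e, H.h_mul_f, map_ofNat]⟩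

@[simp] theorem lift_e (H : Sl2Relations e f h) : lift H (Ue k) = e := by
  simp [lift, Ue]

@[simp] theorem lift_f (H : Sl2Relations e f h) : lift H (Uf k) = f := by
  simp [lift, Uf]

@[simp] theorem lift_h (H : Sl2Relations e f h) : lift H (Uh k) = h := by
  simp [lift, Uh]

end Usl2

namespace Ulam

variable (k : Type*) [CommRing k] (lam : k)

noncomputable abbrev mk : Usl2 k →ₐ[k] Ulam k lam :=
  RingQuot.mkAlgHom k (CasRel k lam)

theorem sl2Relations : Sl2Relations (mk k lam (Ue k)) (mk k lam (Uf k)) (mk k lam (Uh k)) :=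
  (Usl2.sl2Relations k).map (mk k lam)

theorem casimir :
    4 * mk k lam (Uf k) * mk k lam (Ue k) + mk k lam (Uh k) ^ 2 + 2 * mk k lam (Uh k) =
      algebraMap k (Ulam k lam) (lam ^ 2 - 1) := by
  have h := RingQuot.mkAlgHom_rel k (CasRel.rel (lam := lam))
  simp only [Casimir, map_add, map_mul, map_pow, AlgHom.commutes] at h
  -- `RingQuot` carries its own `OfNat`, `SMul`, ... instances, which agree with those derived
  -- from its `Algebra` structure only after unfolding instances; `simp` does not see through
  -- this, so lemmas such as `map_ofNat` are applied to quotient rings by `rw` or `exact`.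
  rwa [map_ofNat, map_ofNat] at h

variable {k lam} {A : Type*} [Semiring A] [Algebra k A]

noncomputable def lift (g : Usl2 k →ₐ[k] A)
    (hg : g (Casimir k) = algebraMap k A (lam ^ 2 - 1)) : Ulam k lam →ₐ[k] A :=
  RingQuot.liftAlgHom k ⟨g, by rintro _ _ ⟨⟩; rwa [AlgHom.commutes]⟩

@[simp] theorem lift_mk (g : Usl2 k →ₐ[k] A) (hg : g (Casimir k) = algebraMap k A (lam ^ 2 - 1))
    (u : Usl2 k) : lift g hg (mk k lam u) = g u :=
  RingQuot.liftAlgHom_mkAlgHom_apply _ _ _ _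

theorem algHom_ext {g₁ g₂ : Ulam k lam →ₐ[k] A} (h : g₁.comp (mk k lam) = g₂.comp (mk k lam)) :
    g₁ = g₂ :=
  RingQuot.ringQuot_ext' _ _ _ h

end Ulam

namespace GWA

section

variable {k R : Type*} [CommRing k] [Ring R] [Algebra k R] {n : ℕ}
  (σ : Fin n → R ≃ₐ[k] R) (a : Fin n → R)

noncomputable def rHom : R →ₐ[k] GWA k R n σ a where
  toFun := GWA.r k R σ a
  map_one' := by simpa [GWA.r] using RingQuot.mkAlgHom_rel k (GWARel.one (σ := σ) (a := a))
  map_mul' p q := by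
    simpa [GWA.r] using RingQuot.mkAlgHom_rel k (GWARel.mul (σ := σ) (a := a) p q)
  map_zero' := by
    simpa [GWA.r] using RingQuot.mkAlgHom_rel k (GWARel.smul (σ := σ) (a := a) 0 1)
  map_add' p q := by
    simpa [GWA.r] using RingQuot.mkAlgHom_rel k (GWARel.add (σ := σ) (a := a) p q)
  commutes' c := by
    have hsmul := RingQuot.mkAlgHom_rel k (GWARel.smul (σ := σ) (a := a) c 1)
    rw [map_smul, RingQuot.mkAlgHom_rel k GWARel.one, map_one,
      ← Algebra.algebraMap_eq_smul_one] at hsmul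
    exact hsmul.trans (Algebra.algebraMap_eq_smul_one c).symm

theorem rHom_apply (p : R) : rHom σ a p = GWA.r k R σ a p :=
  rfl

theorem x_mul_r (i : Fin n) (p : R) :
    GWA.x k R σ a i * GWA.r k R σ a p = GWA.r k R σ a (σ i p) * GWA.x k R σ a i := by
  simpa only [GWA.x, GWA.r, map_mul] using RingQuot.mkAlgHom_rel k (GWARel.xr (a := a) i p)

theorem y_mul_r (i : Fin n) (p : R) :
    GWA.y k R σ a i * GWA.r k R σ a p = GWA.r k R σ a ((σ i).symm p) * GWA.y k R σ a i := by
  simpa only [GWA.y, GWA.r, map_mul] using RingQuot.mkAlgHom_rel k (GWARel.yr (a := a) i p)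

theorem y_mul_x (i : Fin n) : GWA.y k R σ a i * GWA.x k R σ a i = GWA.r k R σ a (a i) := by
  simpa only [GWA.x, GWA.y, GWA.r, map_mul] using
    RingQuot.mkAlgHom_rel k (GWARel.yx (σ := σ) (a := a) i)

theorem x_mul_y (i : Fin n) :
    GWA.x k R σ a i * GWA.y k R σ a i = GWA.r k R σ a (σ i (a i)) := by
  simpa only [GWA.x, GWA.y, GWA.r, map_mul] using
    RingQuot.mkAlgHom_rel k (GWARel.xy (σ := σ) (a := a) i)

variable {A : Type*} [Semiring A] [Algebra k A]

structure Relations (ρ : R →ₐ[k] A) (x y : Fin n → A) : Prop where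
  x_mul : ∀ i p, x i * ρ p = ρ (σ i p) * x i
  y_mul : ∀ i p, y i * ρ p = ρ ((σ i).symm p) * y i
  y_mul_x : ∀ i, y i * x i = ρ (a i)
  x_mul_y : ∀ i, x i * y i = ρ (σ i (a i))
  pairwise_commute :
    Pairwise fun i j ↦ Commute (x i) (x j) ∧ Commute (y i) (y j) ∧ Commute (x i) (y j)

variable {σ a} {ρ : R →ₐ[k] A} {x y : Fin n → A}

noncomputable def lift (H : Relations σ a ρ x y) : GWA k R n σ a →ₐ[k] A :=
  RingQuot.liftAlgHom k ⟨FreeAlgebra.lift k (Sum.elim ρ fun v ↦ bif v.2 then y v.1 else x v.1), by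
    intro _ _ hrel
    cases hrel with
    | comm i j s t hij =>
      obtain ⟨hxx, hyy, hxy⟩ := H.pairwise_commute hij
      cases s <;> cases t <;> simp [hxx.eq, hyy.eq, hxy.eq, (H.pairwise_commute hij.symm).2.2.eq]
    | _ => simp [H.x_mul, H.y_mul, H.y_mul_x, H.x_mul_y]⟩

@[simp] theorem lift_r (H : Relations σ a ρ x y) (p : R) : lift H (GWA.r k R σ a p) = ρ p := by
  simp [lift, GWA.r]

@[simp] theorem lift_x (H : Relations σ a ρ x y) (i : Fin n) : lift H (GWA.x k R σ a i) = x i := by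
  simp [lift, GWA.x]

@[simp] theorem lift_y (H : Relations σ a ρ x y) (i : Fin n) : lift H (GWA.y k R σ a i) = y i := by
  simp [lift, GWA.y]

theorem algHom_ext {g₁ g₂ : GWA k R n σ a →ₐ[k] A}
    (hr : g₁.comp (rHom σ a) = g₂.comp (rHom σ a))
    (hx : ∀ i, g₁ (GWA.x k R σ a i) = g₂ (GWA.x k R σ a i))
    (hy : ∀ i, g₁ (GWA.y k R σ a i) = g₂ (GWA.y k R σ a i)) : g₁ = g₂ :=
  RingQuot.ringQuot_ext' _ _ _ <| FreeAlgebra.hom_ext <| funext fun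
    | .inl p => DFunLike.congr_fun hr p
    | .inr (i, false) => hx i
    | .inr (i, true) => hy i

end

theorem r_eq_aeval {k : Type*} [CommRing k] {n : ℕ} {σ : Fin n → k[X] ≃ₐ[k] k[X]}
    {a : Fin n → k[X]} (p : k[X]) : GWA.r k k[X] σ a p = aeval (GWA.r k k[X] σ a X) p := by
  rw [← rHom_apply, ← rHom_apply, aeval_algHom_apply, aeval_X_left_apply]

end GWA

section Classical

variable (k : Type*) [Field k] (lam : k)

noncomputable abbrev classicalGWAPoly : k[X] := C ((lam ^ 2 - 1) / 4) - X ^ 2 - X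

abbrev ClassicalGWA : Type _ := GWA k k[X] 1 ![shiftDown k] ![classicalGWAPoly k lam]

namespace ClassicalGWA

noncomputable def x : ClassicalGWA k lam := GWA.x k k[X] _ _ 0

noncomputable def y : ClassicalGWA k lam := GWA.y k k[X] _ _ 0

noncomputable def z : ClassicalGWA k lam := GWA.r k k[X] _ _ X

theorem classicalGWARelations :
    ClassicalGWARelations (algebraMap k _ ((lam ^ 2 - 1) / 4)) (x k lam) (y k lam) (z k lam) where
  x_mul_z := by
    simpa [x, z, shiftDown_apply, ← GWA.rHom_apply] using
      GWA.x_mul_r ![shiftDown k] ![classicalGWAPoly k lam] 0 X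
  y_mul_z := by
    simpa [y, z, shiftDown_symm_apply, ← GWA.rHom_apply] using
      GWA.y_mul_r ![shiftDown k] ![classicalGWAPoly k lam] 0 X
  y_mul_x := by
    rw [y, x, GWA.y_mul_x, GWA.r_eq_aeval]
    simp [z]
  x_mul_y := by
    rw [y, x, GWA.x_mul_y, GWA.r_eq_aeval]
    simp [z, aeval_shiftDown]

variable {k lam}

theorem algHom_ext {A : Type*} [Semiring A] [Algebra k A] {g₁ g₂ : ClassicalGWA k lam →ₐ[k] A}
    (hx : g₁ (x k lam) = g₂ (x k lam)) (hy : g₁ (y k lam) = g₂ (y k lam))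
    (hz : g₁ (z k lam) = g₂ (z k lam)) : g₁ = g₂ :=
  GWA.algHom_ext (Polynomial.algHom_ext hz) (fun i ↦ Subsingleton.elim i 0 ▸ hx)
    (fun i ↦ Subsingleton.elim i 0 ▸ hy)

variable {A : Type*} [Ring A] [Algebra k A] {x' y' z' : A}

theorem _root_.ClassicalGWARelations.gwaRelations
    (H : ClassicalGWARelations (algebraMap k A ((lam ^ 2 - 1) / 4)) x' y' z') :
    GWA.Relations ![shiftDown k] ![classicalGWAPoly k lam] (aeval z') (fun _ ↦ x')
      (fun _ ↦ y') where
  x_mul _ p := by simpa [aeval_shiftDown] using (SemiconjBy.aeval H.x_mul_z p).eq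
  y_mul _ p := by simpa [aeval_shiftDown_symm] using (SemiconjBy.aeval H.y_mul_z p).eq
  y_mul_x _ := by simp [H.y_mul_x]
  x_mul_y _ := by simp [aeval_shiftDown, H.x_mul_y]
  pairwise_commute i j hij := (hij (Subsingleton.elim i j)).elim

variable (H : ClassicalGWARelations (algebraMap k A ((lam ^ 2 - 1) / 4)) x' y' z')

noncomputable def lift : ClassicalGWA k lam →ₐ[k] A :=
  GWA.lift H.gwaRelations

@[simp] theorem lift_x : lift H (x k lam) = x' :=
  GWA.lift_x ..

@[simp] theorem lift_y : lift H (y k lam) = y' :=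
  GWA.lift_y ..

@[simp] theorem lift_z : lift H (z k lam) = z' :=
  (GWA.lift_r _ X).trans (aeval_X z')

end ClassicalGWA

variable [NeZero (2 : k)]

namespace Ulam

noncomputable def toClassicalGWA : Ulam k lam →ₐ[k] ClassicalGWA k lam :=
  lift (Usl2.lift (ClassicalGWA.classicalGWARelations k lam).sl2Relations) <| by
    simp only [Casimir, map_add, map_mul, map_pow, Usl2.lift_e, Usl2.lift_f, Usl2.lift_h]
    rw [map_ofNat, map_ofNat]
    exact (ClassicalGWA.classicalGWARelations k lam).casimir

noncomputable def ofClassicalGWA : ClassicalGWA k lam →ₐ[k] Ulam k lam :=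
  ClassicalGWA.lift ((sl2Relations k lam).classicalGWARelations (casimir k lam))

theorem toClassicalGWA_comp_ofClassicalGWA :
    (toClassicalGWA k lam).comp (ofClassicalGWA k lam) = AlgHom.id k _ :=
  ClassicalGWA.algHom_ext (by simp [toClassicalGWA, ofClassicalGWA])
    (by simp [toClassicalGWA, ofClassicalGWA]) <| by
      simpa [toClassicalGWA, ofClassicalGWA] using
        neg_inv_two_smul_neg_two_smul (k := k) (ClassicalGWA.z k lam)

theorem ofClassicalGWA_comp_toClassicalGWA :
    (ofClassicalGWA k lam).comp (toClassicalGWA k lam) = AlgHom.id k _ := by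
  apply algHom_ext
  refine Usl2.algHom_ext (by simp [toClassicalGWA, ofClassicalGWA])
    (by simp [toClassicalGWA, ofClassicalGWA]) ?_
  simpa [toClassicalGWA, ofClassicalGWA] using
    neg_two_smul_neg_inv_two_smul (k := k) (mk k lam (Uh k))

noncomputable def equivClassicalGWA : Ulam k lam ≃ₐ[k] ClassicalGWA k lam :=
  AlgEquiv.ofAlgHom (toClassicalGWA k lam) (ofClassicalGWA k lam)
    (toClassicalGWA_comp_ofClassicalGWA k lam) (ofClassicalGWA_comp_toClassicalGWA k lam)

end Ulam

end Classical

/-- For `λ ∈ k`, the primitive quotient `U_λ = U(sl₂)/(Ω - (λ²-1))`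
is isomorphic to the classical GWA `k[z](σ, a)` with `σ(z) = z - 1` and
`a = (1/4)(λ² - 1) - z² - z`. -/
theorem Ulam_iso_classical_gwa (k : Type*) [Field k] [CharZero k] (lam : k) :
    Nonempty (Ulam k lam ≃ₐ[k]
      GWA k (Polynomial k) 1 ![shiftDown k]
        ![Polynomial.C ((lam ^ 2 - 1) / 4) - Polynomial.X ^ 2 - Polynomial.X]) :=
  ⟨Ulam.equivClassicalGWA k lam⟩
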